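/- Truth lemma for the canonical model of 2CH: for every sort ∗ (any agent sort a ∈ A or the world sort e), every MCS S of sort ∗, and every formula ξ of sort ∗, the canonical model satisfies S ⊨_∗ ξ if and only if ξ ∈ S. -/

import Mathlib

/-! ## Syntax of the two-level chromatic hypergraph logic 2CH -/

mutual
/-- Agent formulas of sort `a`, for each agent `a : A`. -/
inductive AForm (A : Type) (APa : A → Type) (APe : Type) : A → Type where
  | atom {a : A} : APa a → AForm A APa APe a
  | bot  {a : A} : AForm A APa APe a
  | neg  {a : A} : AForm A APa APe a → AForm A APa APe a
  | and  {a : A} : AForm A APa APe a → AForm A APa APe a → AForm A APa APe a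
  | dia  (a : A) : WForm A APa APe → AForm A APa APe a

/-- World formulas. -/
inductive WForm (A : Type) (APa : A → Type) (APe : Type) : Type where
  | atom : APe → WForm A APa APe
  | bot  : WForm A APa APe
  | neg  : WForm A APa APe → WForm A APa APe
  | and  : WForm A APa APe → WForm A APa APe → WForm A APa APe
  | exi  (a : A) : AForm A APa APe a → WForm A APa APe
end

variable {A : Type} {APa : A → Type} {APe : Type}

/-- Implication of agent formulas. -/
def implA {a : A} (φ ψ : AForm A APa APe a) : AForm A APa APe a := .neg (.and φ (.neg ψ))
/-- Disjunction of agent formulas. -/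
def orA {a : A} (φ ψ : AForm A APa APe a) : AForm A APa APe a := .neg (.and (.neg φ) (.neg ψ))
/-- `⊤` as an agent formula. -/
def topA (a : A) : AForm A APa APe a := .neg .bot
/-- Implication of world formulas. -/
def implW (Φ Ψ : WForm A APa APe) : WForm A APa APe := .neg (.and Φ (.neg Ψ))
/-- Disjunction of world formulas. -/
def orW (Φ Ψ : WForm A APa APe) : WForm A APa APe := .neg (.and (.neg Φ) (.neg Ψ))
/-- The dual modality `□_a Φ := ¬◇_a ¬Φ`. -/
def boxF (a : A) (Φ : WForm A APa APe) : AForm A APa APe a := .neg (.dia a (.neg Φ))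
/-- The dual modality `A_a φ := ¬E_a ¬φ`. -/
def allF (a : A) (φ : AForm A APa APe a) : WForm A APa APe := .neg (.exi a (.neg φ))
/-- Finite disjunction of a list of world formulas. -/
def listOrW : List (WForm A APa APe) → WForm A APa APe
  | [] => .bot
  | Φ :: rest => orW Φ (listOrW rest)

/-- The non-emptiness axiom `⋁_{a∈A} E_a ⊤`. -/
noncomputable def neAxiom (A : Type) [Fintype A] (APa : A → Type) (APe : Type) : WForm A APa APe :=
  listOrW (((Finset.univ : Finset A).toList).map fun a => WForm.exi a (topA a))

/-- `φ` is an instance of a classical propositional tautology (agent sort):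
every Boolean valuation respecting `⊥`, `¬`, `∧` makes it true. -/
def ATaut {a : A} (φ : AForm A APa APe a) : Prop :=
  ∀ v : AForm A APa APe a → Bool,
    v .bot = false →
    (∀ ψ : AForm A APa APe a, v ψ.neg = !(v ψ)) →
    (∀ ψ χ : AForm A APa APe a, v (ψ.and χ) = (v ψ && v χ)) →
    v φ = true

/-- `Φ` is an instance of a classical propositional tautology (world sort). -/
def WTaut (Φ : WForm A APa APe) : Prop :=
  ∀ v : WForm A APa APe → Bool,
    v .bot = false →
    (∀ Ψ : WForm A APa APe, v Ψ.neg = !(v Ψ)) →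
    (∀ Ψ Χ : WForm A APa APe, v (Ψ.and Χ) = (v Ψ && v Χ)) →
    v Φ = true

/-! ## The proof system of 2CH -/

mutual
/-- Derivability `⊢_a` of agent formulas of sort `a`. -/
inductive ProveA (A : Type) [Fintype A] (APa : A → Type) (APe : Type) :
    ∀ {a : A}, AForm A APa APe a → Prop where
  | taut {a : A} {φ : AForm A APa APe a} : ATaut φ → ProveA A APa APe φ
  | mp {a : A} {φ ψ : AForm A APa APe a} :
      ProveA A APa APe (implA φ ψ) → ProveA A APa APe φ → ProveA A APa APe ψ
  | nec {a : A} {Φ : WForm A APa APe} :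
      ProveE A APa APe Φ → ProveA A APa APe (boxF a Φ)
  | monoDia {a : A} {Φ Ψ : WForm A APa APe} :
      ProveE A APa APe (implW Φ Ψ) →
      ProveA A APa APe (implA (AForm.dia a Φ) (AForm.dia a Ψ))
  | monoBox {a : A} {Φ Ψ : WForm A APa APe} :
      ProveE A APa APe (implW Φ Ψ) →
      ProveA A APa APe (implA (boxF a Φ) (boxF a Ψ))
  | adj1 {a : A} {Φ : WForm A APa APe} {ψ : AForm A APa APe a} :
      ProveE A APa APe (implW Φ (allF a ψ)) →
      ProveA A APa APe (implA (AForm.dia a Φ) ψ)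
  | adj2 {a : A} {φ : AForm A APa APe a} {Ψ : WForm A APa APe} :
      ProveE A APa APe (implW (WForm.exi a φ) Ψ) →
      ProveA A APa APe (implA φ (boxF a Ψ))
  | surj {a : A} {φ : AForm A APa APe a} :
      ProveA A APa APe (implA φ (AForm.dia a (WForm.exi a φ)))
  | func {a : A} {φ : AForm A APa APe a} :
      ProveA A APa APe (implA (AForm.dia a (WForm.exi a φ)) φ)

/-- Derivability `⊢_e` of world formulas. -/
inductive ProveE (A : Type) [Fintype A] (APa : A → Type) (APe : Type) :
    WForm A APa APe → Prop where
  | taut {Φ : WForm A APa APe} : WTaut Φ → ProveE A APa APe Φ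
  | mp {Φ Ψ : WForm A APa APe} :
      ProveE A APa APe (implW Φ Ψ) → ProveE A APa APe Φ → ProveE A APa APe Ψ
  | nec {a : A} {φ : AForm A APa APe a} :
      ProveA A APa APe φ → ProveE A APa APe (allF a φ)
  | monoExi {a : A} {φ ψ : AForm A APa APe a} :
      ProveA A APa APe (implA φ ψ) →
      ProveE A APa APe (implW (WForm.exi a φ) (WForm.exi a ψ))
  | monoAll {a : A} {φ ψ : AForm A APa APe a} :
      ProveA A APa APe (implA φ ψ) →
      ProveE A APa APe (implW (allF a φ) (allF a ψ))
  | adj1 {a : A} {Φ : WForm A APa APe} {ψ : AForm A APa APe a} :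
      ProveA A APa APe (implA (AForm.dia a Φ) ψ) →
      ProveE A APa APe (implW Φ (allF a ψ))
  | adj2 {a : A} {φ : AForm A APa APe a} {Ψ : WForm A APa APe} :
      ProveA A APa APe (implA φ (boxF a Ψ)) →
      ProveE A APa APe (implW (WForm.exi a φ) Ψ)
  | nonempty : ProveE A APa APe (neAxiom A APa APe)
end

/-! ## Chromatic hypergraphs and their models -/

/-- A chromatic hypergraph over the set of agents `A`. -/
structure ChromHyp (A : Type) where
  /-- hyperedges (worlds) -/
  E : Type
  /-- views of agent `a` -/
  V : A → Type
  /-- the surjective partial function assigning to a hyperedge the view of agent `a` in it -/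
  proj : ∀ a : A, E → Option (V a)
  surj : ∀ (a : A) (v : V a), ∃ e : E, proj a e = some v
  edge_nonempty : ∀ e : E, ∃ a : A, (proj a e).isSome

/-- A chromatic hypergraph model: a chromatic hypergraph together with valuations. -/
structure ChromHypModel (A : Type) (APa : A → Type) (APe : Type) extends ChromHyp A where
  valA : ∀ a : A, APa a → Set (V a)
  valE : APe → Set E

mutual
/-- Satisfaction `H, v ⊨_a φ` of an agent formula at a view of agent `a`. -/
def SatA (H : ChromHypModel A APa APe) : ∀ (a : A), H.V a → AForm A APa APe a → Prop
  | a, v, .atom p => v ∈ H.valA a p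
  | _, _, .bot => False
  | a, v, .neg φ => ¬ SatA H a v φ
  | a, v, .and φ ψ => SatA H a v φ ∧ SatA H a v ψ
  | a, v, .dia _ Φ => ∃ e : H.E, H.proj a e = some v ∧ SatE H e Φ

/-- Satisfaction `H, e ⊨_e Φ` of a world formula at a hyperedge. -/
def SatE (H : ChromHypModel A APa APe) : H.E → WForm A APa APe → Prop
  | e, .atom p => e ∈ H.valE p
  | _, .bot => False
  | e, .neg Φ => ¬ SatE H e Φ
  | e, .and Φ Ψ => SatE H e Φ ∧ SatE H e Ψ
  | e, .exi a φ => ∃ v : H.V a, H.proj a e = some v ∧ SatA H a v φ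
end


/-! ## Consistent and maximal consistent sets -/

variable (A : Type) [Fintype A] (APa : A → Type) (APe : Type)

/-- Finite conjunction of a list of agent formulas. -/
def listAndA {a : A} : List (AForm A APa APe a) → AForm A APa APe a
  | [] => topA a
  | φ :: rest => .and φ (listAndA rest)

/-- Finite conjunction of a list of world formulas. -/
def listAndW : List (WForm A APa APe) → WForm A APa APe
  | [] => .neg .bot
  | Φ :: rest => .and Φ (listAndW rest)

/-- A set of agent formulas of sort `a` is consistent if `⊥` is not derivable from it. -/
def AConsistent {a : A} (S : Set (AForm A APa APe a)) : Prop :=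
  ¬ ∃ L : List (AForm A APa APe a), (∀ φ ∈ L, φ ∈ S) ∧
      ProveA A APa APe (implA (listAndA A APa APe L) AForm.bot)

/-- A set of world formulas is consistent if `⊥` is not derivable from it. -/
def WConsistent (S : Set (WForm A APa APe)) : Prop :=
  ¬ ∃ L : List (WForm A APa APe), (∀ Φ ∈ L, Φ ∈ S) ∧
      ProveE A APa APe (implW (listAndW A APa APe L) WForm.bot)

/-- A maximal consistent set (MCS) of agent formulas of sort `a`. -/
def AMCS {a : A} (S : Set (AForm A APa APe a)) : Prop :=
  AConsistent A APa APe S ∧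
    ∀ T : Set (AForm A APa APe a), AConsistent A APa APe T → S ⊆ T → S = T

/-- A maximal consistent set (MCS) of world formulas. -/
def WMCS (S : Set (WForm A APa APe)) : Prop :=
  WConsistent A APa APe S ∧
    ∀ T : Set (WForm A APa APe), WConsistent A APa APe T → S ⊆ T → S = T

/-- The relation `R_a` of the canonical model between world-sort MCSs and sort-`a` MCSs:
`S_E R_a S_a` iff for every world formula `Φ ∈ S_E`, `◇_a Φ ∈ S_a`. -/
def canonR (a : A) (SE : Set (WForm A APa APe)) (Sa : Set (AForm A APa APe a)) : Prop :=
  ∀ Φ : WForm A APa APe, Φ ∈ SE → AForm.dia a Φ ∈ Sa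


/-! Both sorts carry a classical propositional calculus, for which Lindenbaum's lemma (by
Teichmüller–Tukey) and the Boolean closure properties of maximal consistent sets are proved once.
The modal cases of the induction rest on two existence lemmas. If `◇_a Φ ∈ S_a`, then
`{Φ} ∪ {Ψ | □_a Ψ ∈ S_a}` is consistent, because `□_a` commutes with finite conjunctions by the
adjunction `E_a ⊣ □_a`. If `E_a φ ∈ S_E`, then `{φ} ∪ {◇_a Ψ | Ψ ∈ S_E}` is consistent by the
adjunction `◇_a ⊣ A_a`. Conversely, `S_E R_a S_a` and `φ ∈ S_a` force `E_a φ ∈ S_E`, since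
`φ → □_a E_a φ` is the adjoint of `E_a φ → E_a φ`. -/

theorem List.exists_map_eq_of_forall_mem_image {α β : Type*} {f : α → β} {s : Set α} :
    ∀ {L : List β}, (∀ x ∈ L, x ∈ f '' s) → ∃ M : List α, (∀ y ∈ M, y ∈ s) ∧ M.map f = L
  | [], _ => ⟨[], by simp, rfl⟩
  | x :: L, h => by
    obtain ⟨y, hy, rfl⟩ := h x List.mem_cons_self
    obtain ⟨M, hM, rfl⟩ :=
      exists_map_eq_of_forall_mem_image fun z hz => h z (List.mem_cons_of_mem _ hz)
    exact ⟨y :: M, by simpa [hy] using hM, rfl⟩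

structure ClassicalCalculus (F : Type) where
  bot : F
  neg : F → F
  and : F → F → F
  Prv : F → Prop
  taut {φ : F} :
    (∀ v : F → Bool, v bot = false → (∀ ψ, v (neg ψ) = !v ψ) →
      (∀ ψ χ, v (and ψ χ) = (v ψ && v χ)) → v φ = true) → Prv φ
  mp {φ ψ : F} : Prv (neg (and φ (neg ψ))) → Prv φ → Prv ψ

namespace ClassicalCalculus

variable {F : Type} (P : ClassicalCalculus F)

def impl (φ ψ : F) : F := P.neg (P.and φ (P.neg ψ))

def listAnd : List F → F
  | [] => P.neg P.bot
  | φ :: L => P.and φ (listAnd L)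

def Con (S : Set F) : Prop :=
  ¬ ∃ L : List F, (∀ φ ∈ L, φ ∈ S) ∧ P.Prv (P.impl (P.listAnd L) P.bot)

def MCS (S : Set F) : Prop := P.Con S ∧ ∀ T, P.Con T → S ⊆ T → S = T

variable {P}

theorem prv_of_prv_impl₂ {φ ψ χ : F} (h : P.Prv (P.impl φ (P.impl ψ χ))) (hφ : P.Prv φ)
    (hψ : P.Prv ψ) : P.Prv χ :=
  P.mp (P.mp h hφ) hψ

theorem prv_impl_refl (φ : F) : P.Prv (P.impl φ φ) :=
  P.taut fun v _ hn ha => by simp only [impl, hn, ha]; grind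

theorem prv_impl_trans {φ ψ χ : F} (h₁ : P.Prv (P.impl φ ψ)) (h₂ : P.Prv (P.impl ψ χ)) :
    P.Prv (P.impl φ χ) :=
  prv_of_prv_impl₂ (P.taut fun v _ hn ha => by simp only [impl, hn, ha]; grind) h₁ h₂

theorem prv_impl_and {φ ψ χ : F} (h₁ : P.Prv (P.impl χ φ)) (h₂ : P.Prv (P.impl χ ψ)) :
    P.Prv (P.impl χ (P.and φ ψ)) :=
  prv_of_prv_impl₂ (P.taut fun v _ hn ha => by simp only [impl, hn, ha]; grind) h₁ h₂

theorem prv_listAnd_nil : P.Prv (P.listAnd []) :=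
  P.taut fun v hb hn _ => by simp only [listAnd, hn, hb]; rfl

theorem prv_listAnd_impl_of_mem {L : List F} {φ : F} (h : φ ∈ L) :
    P.Prv (P.impl (P.listAnd L) φ) := by
  induction L with
  | nil => simp at h
  | cons ψ L ih =>
    rcases List.mem_cons.1 h with rfl | h
    · exact P.taut fun v _ hn ha => by simp only [impl, listAnd, hn, ha]; grind
    · exact prv_impl_trans (P.taut fun v _ hn ha => by simp only [impl, listAnd, hn, ha]; grind)
        (ih h)

theorem prv_impl_listAnd {χ : F} {L : List F} (h : ∀ φ ∈ L, P.Prv (P.impl χ φ)) :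
    P.Prv (P.impl χ (P.listAnd L)) := by
  induction L with
  | nil =>
    exact P.mp (P.taut fun v _ hn ha => by simp only [impl, hn, ha]; grind) prv_listAnd_nil
  | cons φ L ih =>
    exact prv_impl_and (h φ List.mem_cons_self) (ih fun ψ hψ => h ψ (List.mem_cons_of_mem φ hψ))

theorem prv_listAnd_impl_listAnd {L L' : List F} (h : ∀ φ ∈ L', φ ∈ L) :
    P.Prv (P.impl (P.listAnd L) (P.listAnd L')) :=
  prv_impl_listAnd fun φ hφ => prv_listAnd_impl_of_mem (h φ hφ)

theorem isOfFiniteCharacter_con : Order.IsOfFiniteCharacter {S | P.Con S} := by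
  intro S
  constructor
  · rintro hS T hTS - ⟨L, hL, hprv⟩
    exact hS ⟨L, fun φ hφ => hTS (hL φ hφ), hprv⟩
  · rintro h ⟨L, hL, hprv⟩
    exact h {φ | φ ∈ L} hL L.finite_toSet ⟨L, fun φ hφ => hφ, hprv⟩

theorem exists_mcs_superset {S : Set F} (hS : P.Con S) : ∃ M, S ⊆ M ∧ P.MCS M := by
  obtain ⟨M, hSM, hM⟩ := isOfFiniteCharacter_con.exists_maximal hS
  exact ⟨M, hSM, hM.1, fun T hT hMT => hMT.antisymm (hM.2 hT hMT)⟩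

theorem exists_listAnd_impl_neg_of_not_con_insert {S : Set F} {χ : F}
    (h : ¬ P.Con (insert χ S)) :
    ∃ L : List F, (∀ φ ∈ L, φ ∈ S) ∧ P.Prv (P.impl (P.listAnd L) (P.neg χ)) := by
  classical
  obtain ⟨L, hL, hprv⟩ := not_not.1 h
  refine ⟨L.filter (· ∈ S), fun φ hφ => by simpa using (List.mem_filter.1 hφ).2, ?_⟩
  have hsub : ∀ φ ∈ L, φ ∈ χ :: L.filter (· ∈ S) := fun φ hφ => by
    rcases hL φ hφ with rfl | hS
    · exact List.mem_cons_self
    · simp [hφ, hS]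
  refine P.mp (P.taut fun v hb hn ha => ?_) (prv_impl_trans (prv_listAnd_impl_listAnd hsub) hprv)
  simp only [impl, listAnd, hn, ha, hb]
  grind

namespace MCS

variable {S : Set F}

theorem mem_of_con_insert (hS : P.MCS S) {φ : F} (h : P.Con (insert φ S)) : φ ∈ S := by
  rw [hS.2 _ h (Set.subset_insert φ S)]
  exact Set.mem_insert φ S

theorem mem_of_listAnd_impl (hS : P.MCS S) {L : List F} {ψ : F} (hL : ∀ φ ∈ L, φ ∈ S)
    (h : P.Prv (P.impl (P.listAnd L) ψ)) : ψ ∈ S := by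
  refine hS.mem_of_con_insert fun hψ => ?_
  obtain ⟨L', hL', h'⟩ := exists_listAnd_impl_neg_of_not_con_insert (not_not.2 hψ)
  refine hS.1 ⟨L ++ L', fun φ hφ => (List.mem_append.1 hφ).elim (hL φ) (hL' φ), ?_⟩
  have h₁ := prv_impl_trans (prv_listAnd_impl_listAnd fun φ hφ => List.mem_append_left L' hφ) h
  have h₂ := prv_impl_trans (prv_listAnd_impl_listAnd fun φ hφ => List.mem_append_right L hφ) h'
  exact prv_of_prv_impl₂ (P.taut fun v hb hn ha => by simp only [impl, hn, ha, hb]; grind) h₁ h₂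

theorem mem_of_prv (hS : P.MCS S) {φ : F} (h : P.Prv φ) : φ ∈ S :=
  hS.mem_of_listAnd_impl (L := []) (by simp)
    (P.mp (P.taut fun v _ hn ha => by simp only [impl, listAnd, hn, ha]; grind) h)

theorem mem_of_mem_of_prv (hS : P.MCS S) {φ ψ : F} (hφ : φ ∈ S) (h : P.Prv (P.impl φ ψ)) :
    ψ ∈ S :=
  hS.mem_of_listAnd_impl (L := [φ]) (by simpa)
    (prv_impl_trans (prv_listAnd_impl_of_mem List.mem_cons_self) h)

theorem mem_iff_mem_of_prv (hS : P.MCS S) {φ ψ : F} (h₁ : P.Prv (P.impl φ ψ))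
    (h₂ : P.Prv (P.impl ψ φ)) : φ ∈ S ↔ ψ ∈ S :=
  ⟨fun h => hS.mem_of_mem_of_prv h h₁, fun h => hS.mem_of_mem_of_prv h h₂⟩

theorem listAnd_mem (hS : P.MCS S) {L : List F} (hL : ∀ φ ∈ L, φ ∈ S) : P.listAnd L ∈ S :=
  hS.mem_of_listAnd_impl hL (prv_impl_refl _)

theorem bot_not_mem (hS : P.MCS S) : P.bot ∉ S := fun h =>
  hS.1 ⟨[P.bot], by simpa,
    P.taut fun v hb hn ha => by simp only [impl, listAnd, hn, ha, hb]; grind⟩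

theorem neg_mem_iff (hS : P.MCS S) {φ : F} : P.neg φ ∈ S ↔ φ ∉ S := by
  refine ⟨fun hn h => hS.1 ⟨[φ, P.neg φ], by simp [h, hn], ?_⟩, fun h => ?_⟩
  · exact P.taut fun v hb hn ha => by simp only [impl, listAnd, hn, ha, hb]; grind
  · obtain ⟨L, hL, hprv⟩ :=
      exists_listAnd_impl_neg_of_not_con_insert fun hc => h (hS.mem_of_con_insert hc)
    exact hS.mem_of_listAnd_impl hL hprv

theorem and_mem_iff (hS : P.MCS S) {φ ψ : F} : P.and φ ψ ∈ S ↔ φ ∈ S ∧ ψ ∈ S := by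
  refine ⟨fun h => ⟨hS.mem_of_mem_of_prv h ?_, hS.mem_of_mem_of_prv h ?_⟩, fun ⟨hφ, hψ⟩ => ?_⟩
  · exact P.taut fun v _ hn ha => by simp only [impl, hn, ha]; grind
  · exact P.taut fun v _ hn ha => by simp only [impl, hn, ha]; grind
  · exact hS.mem_of_listAnd_impl (L := [φ, ψ]) (by simp [hφ, hψ])
      (P.taut fun v hb hn ha => by simp only [impl, listAnd, hn, ha, hb]; grind)

end MCS

end ClassicalCalculus

def agentCalculus (a : A) : ClassicalCalculus (AForm A APa APe a) where
  bot := .bot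
  neg := .neg
  and := .and
  Prv := ProveA A APa APe
  taut h := ProveA.taut h
  mp := ProveA.mp

def worldCalculus : ClassicalCalculus (WForm A APa APe) where
  bot := .bot
  neg := .neg
  and := .and
  Prv := ProveE A APa APe
  taut h := ProveE.taut h
  mp := ProveE.mp

variable {A APa APe}

open ClassicalCalculus

theorem agentCalculus_listAnd {a : A} (L : List (AForm A APa APe a)) :
    (agentCalculus A APa APe a).listAnd L = listAndA A APa APe L := by
  induction L with
  | nil => rfl
  | cons φ L ih => exact congrArg (AForm.and φ) ih

theorem worldCalculus_listAnd (L : List (WForm A APa APe)) :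
    (worldCalculus A APa APe).listAnd L = listAndW A APa APe L := by
  induction L with
  | nil => rfl
  | cons Φ L ih => exact congrArg (WForm.and Φ) ih

theorem agentCalculus_mcs_iff {a : A} {S : Set (AForm A APa APe a)} :
    (agentCalculus A APa APe a).MCS S ↔ AMCS A APa APe S := by
  simp only [MCS, ClassicalCalculus.Con, agentCalculus_listAnd]
  rfl

theorem worldCalculus_mcs_iff {S : Set (WForm A APa APe)} :
    (worldCalculus A APa APe).MCS S ↔ WMCS A APa APe S := by
  simp only [MCS, ClassicalCalculus.Con, worldCalculus_listAnd]
  rfl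

theorem proveA_box_and_box_impl_box_and (a : A) (Φ Ψ : WForm A APa APe) :
    ProveA A APa APe (implA (.and (boxF a Φ) (boxF a Ψ)) (boxF a (.and Φ Ψ))) := by
  refine ProveA.adj2
    (prv_impl_and (P := worldCalculus A APa APe) (ProveE.adj2 ?_) (ProveE.adj2 ?_))
  all_goals exact ProveA.taut fun v _ hn ha => by simp only [implA, hn, ha]; grind

theorem box_listAnd_mem {a : A} {S : Set (AForm A APa APe a)}
    (hS : (agentCalculus A APa APe a).MCS S) {L : List (WForm A APa APe)}
    (hL : ∀ Ψ ∈ L, boxF a Ψ ∈ S) : boxF a ((worldCalculus A APa APe).listAnd L) ∈ S := by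
  induction L with
  | nil => exact hS.mem_of_prv (ProveA.nec (prv_listAnd_nil (P := worldCalculus A APa APe)))
  | cons Ψ L ih =>
    refine hS.mem_of_mem_of_prv (hS.and_mem_iff.2 ⟨hL Ψ List.mem_cons_self, ?_⟩)
      (proveA_box_and_box_impl_box_and a Ψ _)
    exact ih fun Ψ' hΨ' => hL Ψ' (List.mem_cons_of_mem Ψ hΨ')

theorem dia_mem_iff_box_neg_not_mem {a : A} {S : Set (AForm A APa APe a)}
    (hS : (agentCalculus A APa APe a).MCS S) {Φ : WForm A APa APe} :
    AForm.dia a Φ ∈ S ↔ boxF a (.neg Φ) ∉ S := by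
  -- `□_a ¬Φ` unfolds to `¬◇_a ¬¬Φ`
  have hdneg : AForm.dia a Φ ∈ S ↔ AForm.dia a Φ.neg.neg ∈ S :=
    hS.mem_iff_mem_of_prv
      (ProveA.monoDia (ProveE.taut fun v _ hn ha => by simp only [implW, hn, ha]; grind))
      (ProveA.monoDia (ProveE.taut fun v _ hn ha => by simp only [implW, hn, ha]; grind))
  exact hdneg.trans (hS.neg_mem_iff.not.trans not_not).symm

theorem exi_mem_iff_all_neg_not_mem {a : A} {S : Set (WForm A APa APe)}
    (hS : (worldCalculus A APa APe).MCS S) {φ : AForm A APa APe a} :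
    WForm.exi a φ ∈ S ↔ allF a (.neg φ) ∉ S := by
  have hdneg : WForm.exi a φ ∈ S ↔ WForm.exi a φ.neg.neg ∈ S :=
    hS.mem_iff_mem_of_prv
      (ProveE.monoExi (ProveA.taut fun v _ hn ha => by simp only [implA, hn, ha]; grind))
      (ProveE.monoExi (ProveA.taut fun v _ hn ha => by simp only [implA, hn, ha]; grind))
  exact hdneg.trans (hS.neg_mem_iff.not.trans not_not).symm

theorem exi_mem_of_canonR {a : A} {SE : Set (WForm A APa APe)} {Sa : Set (AForm A APa APe a)}
    (hSE : (worldCalculus A APa APe).MCS SE) (hSa : (agentCalculus A APa APe a).MCS Sa)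
    (hR : canonR A APa APe a SE Sa) {φ : AForm A APa APe a} (hφ : φ ∈ Sa) :
    WForm.exi a φ ∈ SE := by
  by_contra h
  have hdia : AForm.dia a (.neg (.exi a φ)) ∈ Sa := hR _ (hSE.neg_mem_iff.2 h)
  have hbox : boxF a (.exi a φ) ∈ Sa :=
    hSa.mem_of_mem_of_prv hφ (ProveA.adj2 (prv_impl_refl (P := worldCalculus A APa APe) _))
  exact hSa.neg_mem_iff.1 hbox hdia

theorem exists_mcs_canonR_of_dia_mem {a : A} {Sa : Set (AForm A APa APe a)}
    (hSa : (agentCalculus A APa APe a).MCS Sa) {Φ : WForm A APa APe}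
    (hΦ : AForm.dia a Φ ∈ Sa) :
    ∃ SE, (worldCalculus A APa APe).MCS SE ∧ Φ ∈ SE ∧ canonR A APa APe a SE Sa := by
  have hcon : (worldCalculus A APa APe).Con (insert Φ {Ψ | boxF a Ψ ∈ Sa}) := fun hc => by
    obtain ⟨L, hL, hprv⟩ := exists_listAnd_impl_neg_of_not_con_insert (not_not.2 hc)
    exact (dia_mem_iff_box_neg_not_mem hSa).1 hΦ
      (hSa.mem_of_mem_of_prv (box_listAnd_mem hSa hL) (ProveA.monoBox hprv))
  obtain ⟨SE, hT, hSE⟩ := exists_mcs_superset hcon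
  refine ⟨SE, hSE, hT (Set.mem_insert Φ _), fun Ψ hΨ => ?_⟩
  by_contra h
  have hbox : boxF a (.neg Ψ) ∈ Sa := not_not.1 ((dia_mem_iff_box_neg_not_mem hSa).not.1 h)
  exact hSE.neg_mem_iff.1 (hT (Set.mem_insert_of_mem Φ hbox)) hΨ

theorem proveA_dia_listAnd_impl_listAnd_dia (a : A) (M : List (WForm A APa APe)) :
    ProveA A APa APe (implA (.dia a ((worldCalculus A APa APe).listAnd M))
      ((agentCalculus A APa APe a).listAnd (M.map (AForm.dia a)))) :=
  prv_impl_listAnd (P := agentCalculus A APa APe a) fun _ hx => by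
    obtain ⟨Ψ, hΨ, rfl⟩ := List.mem_map.1 hx
    exact ProveA.monoDia (prv_listAnd_impl_of_mem (P := worldCalculus A APa APe) hΨ)

theorem exists_mcs_canonR_of_exi_mem {a : A} {SE : Set (WForm A APa APe)}
    (hSE : (worldCalculus A APa APe).MCS SE) {φ : AForm A APa APe a}
    (hφ : WForm.exi a φ ∈ SE) :
    ∃ Sa, (agentCalculus A APa APe a).MCS Sa ∧ φ ∈ Sa ∧ canonR A APa APe a SE Sa := by
  have hcon : (agentCalculus A APa APe a).Con (insert φ (AForm.dia a '' SE)) := fun hc => by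
    obtain ⟨L, hL, hprv⟩ := exists_listAnd_impl_neg_of_not_con_insert (not_not.2 hc)
    obtain ⟨M, hM, rfl⟩ := List.exists_map_eq_of_forall_mem_image hL
    have hall : ProveE A APa APe (implW ((worldCalculus A APa APe).listAnd M) (allF a φ.neg)) :=
      ProveE.adj1 (prv_impl_trans (proveA_dia_listAnd_impl_listAnd_dia a M) hprv)
    exact (exi_mem_iff_all_neg_not_mem hSE).1 hφ (hSE.mem_of_mem_of_prv (hSE.listAnd_mem hM) hall)
  obtain ⟨Sa, hT, hSa⟩ := exists_mcs_superset hcon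
  exact ⟨Sa, hSa, hT (Set.mem_insert φ _),
    fun Ψ hΨ => hT (Set.mem_insert_of_mem φ (Set.mem_image_of_mem _ hΨ))⟩

structure CanonicalModelIso (H : ChromHypModel A APa APe) where
  edgeEquiv : H.E ≃ {S : Set (WForm A APa APe) // WMCS A APa APe S}
  viewEquiv : ∀ a : A, H.V a ≃ {S : Set (AForm A APa APe a) // AMCS A APa APe S}
  proj_eq_some_iff : ∀ (a : A) (e : H.E) (v : H.V a),
    H.proj a e = some v ↔ canonR A APa APe a (edgeEquiv e).val (viewEquiv a v).val
  mem_valA_iff : ∀ (a : A) (p : APa a) (v : H.V a),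
    v ∈ H.valA a p ↔ AForm.atom p ∈ (viewEquiv a v).val
  mem_valE_iff : ∀ (p : APe) (e : H.E), e ∈ H.valE p ↔ WForm.atom p ∈ (edgeEquiv e).val

namespace CanonicalModelIso

variable {H : ChromHypModel A APa APe} (c : CanonicalModelIso H)

theorem mcs_view {a : A} (v : H.V a) :
    (agentCalculus A APa APe a).MCS (c.viewEquiv a v).val :=
  agentCalculus_mcs_iff.2 (c.viewEquiv a v).2

theorem mcs_edge (e : H.E) : (worldCalculus A APa APe).MCS (c.edgeEquiv e).val :=
  worldCalculus_mcs_iff.2 (c.edgeEquiv e).2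

theorem dia_mem_iff {a : A} (v : H.V a) (Φ : WForm A APa APe) :
    AForm.dia a Φ ∈ (c.viewEquiv a v).val ↔
      ∃ e, H.proj a e = some v ∧ Φ ∈ (c.edgeEquiv e).val := by
  refine ⟨fun h => ?_, fun ⟨e, he, hΦ⟩ => (c.proj_eq_some_iff a e v).1 he Φ hΦ⟩
  obtain ⟨SE, hSE, hΦ, hR⟩ := exists_mcs_canonR_of_dia_mem (c.mcs_view v) h
  refine ⟨c.edgeEquiv.symm ⟨SE, worldCalculus_mcs_iff.1 hSE⟩, ?_, ?_⟩
  · simpa [c.proj_eq_some_iff] using hR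
  · simpa using hΦ

theorem exi_mem_iff {a : A} (e : H.E) (φ : AForm A APa APe a) :
    WForm.exi a φ ∈ (c.edgeEquiv e).val ↔
      ∃ v, H.proj a e = some v ∧ φ ∈ (c.viewEquiv a v).val := by
  refine ⟨fun h => ?_, fun ⟨v, hv, hφ⟩ =>
    exi_mem_of_canonR (c.mcs_edge e) (c.mcs_view v) ((c.proj_eq_some_iff a e v).1 hv) hφ⟩
  obtain ⟨Sa, hSa, hφ, hR⟩ := exists_mcs_canonR_of_exi_mem (c.mcs_edge e) h
  refine ⟨(c.viewEquiv a).symm ⟨Sa, agentCalculus_mcs_iff.1 hSa⟩, ?_, ?_⟩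
  · simpa [c.proj_eq_some_iff] using hR
  · simpa using hφ

mutual

theorem satA_iff : ∀ {a : A} (v : H.V a) (φ : AForm A APa APe a),
    SatA H a v φ ↔ φ ∈ (c.viewEquiv a v).val
  | a, v, .atom p => c.mem_valA_iff a p v
  | _, v, .bot => iff_of_false id (c.mcs_view v).bot_not_mem
  | _, v, .neg φ => (satA_iff v φ).not.trans (c.mcs_view v).neg_mem_iff.symm
  | _, v, .and φ ψ =>
    (and_congr (satA_iff v φ) (satA_iff v ψ)).trans (c.mcs_view v).and_mem_iff.symm
  | _, v, .dia _ Φ =>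
    (exists_congr fun e => and_congr_right fun _ => satE_iff e Φ).trans (c.dia_mem_iff v Φ).symm

theorem satE_iff : ∀ (e : H.E) (Φ : WForm A APa APe), SatE H e Φ ↔ Φ ∈ (c.edgeEquiv e).val
  | e, .atom p => c.mem_valE_iff p e
  | e, .bot => iff_of_false id (c.mcs_edge e).bot_not_mem
  | e, .neg Φ => (satE_iff e Φ).not.trans (c.mcs_edge e).neg_mem_iff.symm
  | e, .and Φ Ψ =>
    (and_congr (satE_iff e Φ) (satE_iff e Ψ)).trans (c.mcs_edge e).and_mem_iff.symm
  | e, .exi _ φ =>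
    (exists_congr fun v => and_congr_right fun _ => satA_iff v φ).trans (c.exi_mem_iff e φ).symm

end

end CanonicalModelIso

/-- **Truth lemma for the canonical model of 2CH**: in any chromatic hypergraph model `H`
realizing the canonical model — its hyperedges are the world-sort MCSs, its `a`-views are
the sort-`a` MCSs, its projections are given by the canonical relations `R_a`, and its
valuations are given by membership of atomic propositions — satisfaction coincides with
membership: `S ⊨_∗ ξ` iff `ξ ∈ S`, for every sort `∗` and every formula `ξ` of sort `∗`. -/
theorem canonical_truth_lemma (A : Type) [Fintype A] (APa : A → Type) (APe : Type)
    (H : ChromHypModel A APa APe)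
    (eE : H.E ≃ {S : Set (WForm A APa APe) // WMCS A APa APe S})
    (eV : ∀ a : A, H.V a ≃ {S : Set (AForm A APa APe a) // AMCS A APa APe S})
    (hproj : ∀ (a : A) (e : H.E) (v : H.V a),
      H.proj a e = some v ↔ canonR A APa APe a (eE e).val ((eV a) v).val)
    (hvalA : ∀ (a : A) (p : APa a) (v : H.V a),
      v ∈ H.valA a p ↔ AForm.atom p ∈ ((eV a) v).val)
    (hvalE : ∀ (p : APe) (e : H.E), e ∈ H.valE p ↔ WForm.atom p ∈ (eE e).val) :
    (∀ (a : A) (v : H.V a) (φ : AForm A APa APe a),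
      SatA H a v φ ↔ φ ∈ ((eV a) v).val) ∧
    (∀ (e : H.E) (Φ : WForm A APa APe),
      SatE H e Φ ↔ Φ ∈ (eE e).val) := by
  let c : CanonicalModelIso H := ⟨eE, eV, hproj, hvalA, hvalE⟩
  exact ⟨fun _ v φ => c.satA_iff v φ, c.satE_iff⟩
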